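/- For every finite voter set R, every δ ∈ (0,1), every voting profile c ∈ {c0,c1}^R, every α ∈ (0,1], and every α-noisy probability distribution y around c, the probability that the relaxed majority fails while the exact majority held is small: Pr_{ỹ∼y}( W_δ(ỹ) = 0 and W(c) = 1 ) ≤ α/δ. -/

import Mathlib

open Finset
open Finset

/-- Number of voters voting for candidate `c0` (encoded as `true`). -/
def votesFor {R : Type*} [Fintype R] (c : R → Bool) : ℕ :=
  (univ.filter (fun r => c r = true)).card

/-- The majority threshold `⌈|R|/2⌉`. -/
noncomputable def majThreshold (R : Type*) [Fintype R] : ℕ :=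
  ⌈(Fintype.card R : ℝ) / 2⌉₊

/-- The majority-voting function `W`: value `1` iff at least `⌈|R|/2⌉` voters vote `c0`. -/
noncomputable def W {R : Type*} [Fintype R] (c : R → Bool) : ℝ :=
  if majThreshold R ≤ votesFor c then 1 else 0

/-- The relaxed majority-voting function `W_δ`: value `1` iff at least
`⌈(1-δ)·⌈|R|/2⌉⌉` voters vote `c0`. -/
noncomputable def Wrel {R : Type*} [Fintype R] (δ : ℝ) (c : R → Bool) : ℝ :=
  if ⌈(1 - δ) * (majThreshold R : ℝ)⌉₊ ≤ votesFor c then 1 else 0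


open scoped Classical in
/-- For every profile `c` and `α`-noisy distribution `y` around `c`, the probability that
the relaxed majority fails while the exact majority held is small:
`Pr_{ỹ∼y}( W_δ(ỹ) = 0 ∧ W(c) = 1 ) ≤ α/δ`. -/
theorem prob_relaxed_fails_le {R : Type*} [Fintype R] [DecidableEq R]
    (δ α : ℝ) (hδ : δ ∈ Set.Ioo (0 : ℝ) 1) (hα : α ∈ Set.Ioc (0 : ℝ) 1)
    (c : R → Bool) (y : (R → Bool) → ℝ)
    (hy0 : ∀ c', 0 ≤ y c') (hy1 : ∑ c', y c' = 1)
    (hnoisy : ∀ r : R, ∑ c' ∈ univ.filter (fun c' : R → Bool => c' r ≠ c r), y c' ≤ α) :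
    ∑ c' ∈ univ.filter (fun c' : R → Bool => Wrel δ c' = 0 ∧ W c = 1), y c' ≤ α / δ := by
  obtain ⟨hδ0, hδ1⟩ := hδ
  obtain ⟨hα0, hα1⟩ := hα
  set B := univ.filter (fun c' : R → Bool => Wrel δ c' = 0 ∧ W c = 1) with hB
  rcases B.eq_empty_or_nonempty with hBe | hBne
  · rw [hBe]
    simp only [sum_empty]
    positivity
  obtain ⟨c₀, hc₀⟩ := hBne
  have hWc : W c = 1 := (mem_filter.mp hc₀).2.2
  have hT : majThreshold R ≤ votesFor c := by
    by_contra h; simp [W, h] at hWc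
  set S := univ.filter (fun r => c r = true) with hS
  have hscard : S.card = votesFor c := rfl
  -- disagreements on S
  set D : (R → Bool) → ℕ := fun c' => (S.filter (fun r => c' r = false)).card with hD
  -- votesFor c ≤ votesFor c' + D c'
  have hsplit : ∀ c' : R → Bool, votesFor c ≤ votesFor c' + D c' := by
    intro c'
    have h0 := Finset.card_filter_add_card_filter_not (s := S) (p := fun r => c' r = true)
    have h1 : D c' = (S.filter (fun r => ¬ c' r = true)).card := by
      show (S.filter (fun r => c' r = false)).card = _
      congr 1
      apply Finset.filter_congr
      intro r _
      simp
    have h2 : (S.filter (fun r => c' r = true)).card ≤ votesFor c' := by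
      apply Finset.card_le_card
      intro r hr
      simp only [hS, mem_filter, mem_univ, true_and] at hr ⊢
      exact hr.2
    omega
  -- votesFor c > 0
  have hspos : 0 < votesFor c := by
    rcases Nat.eq_zero_or_pos (votesFor c) with h0 | h
    · exfalso
      have hT0 : majThreshold R = 0 := by omega
      have hWr : Wrel δ c₀ = 0 := (mem_filter.mp hc₀).2.1
      have : ⌈(1 - δ) * ((majThreshold R : ℕ) : ℝ)⌉₊ ≤ votesFor c₀ := by
        rw [hT0]; simp
      simp [Wrel, this] at hWr
    · exact h
  -- pointwise bound on B
  have hkey : ∀ c' ∈ B, δ * (votesFor c : ℝ) ≤ (D c' : ℝ) := by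
    intro c' hc'
    have hWr : Wrel δ c' = 0 := (mem_filter.mp hc').2.1
    have hlt : votesFor c' < ⌈(1 - δ) * (majThreshold R : ℝ)⌉₊ := by
      by_contra h
      push_neg at h
      simp [Wrel, h] at hWr
    have hltR : (votesFor c' : ℝ) < (1 - δ) * (majThreshold R : ℝ) := Nat.lt_ceil.mp hlt
    have hTle : ((majThreshold R : ℕ) : ℝ) ≤ (votesFor c : ℝ) := by exact_mod_cast hT
    have hsp : (votesFor c : ℝ) ≤ (votesFor c' : ℝ) + (D c' : ℝ) := by
      exact_mod_cast hsplit c'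
    nlinarith
  -- goal via multiplication
  rw [le_div_iff₀ hδ0]
  have hspos' : (0 : ℝ) < (votesFor c : ℝ) := by exact_mod_cast hspos
  rw [← mul_le_mul_iff_left₀ hspos']
  have step1 : (∑ c' ∈ B, y c') * δ * (votesFor c : ℝ)
      ≤ ∑ c' ∈ B, y c' * (D c' : ℝ) := by
    rw [mul_assoc, Finset.sum_mul]
    apply Finset.sum_le_sum
    intro c' hc'
    exact mul_le_mul_of_nonneg_left (hkey c' hc') (hy0 c')
  have step2 : ∑ c' ∈ B, y c' * (D c' : ℝ) ≤ ∑ c' ∈ univ, y c' * (D c' : ℝ) := by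
    apply Finset.sum_le_sum_of_subset_of_nonneg (Finset.filter_subset _ _)
    intro c' _ _
    exact mul_nonneg (hy0 c') (Nat.cast_nonneg _)
  have swap : ∑ c' ∈ univ, y c' * (D c' : ℝ)
      = ∑ r ∈ S, ∑ c' ∈ univ.filter (fun c' : R → Bool => c' r ≠ c r), y c' := by
    have : ∀ c' : R → Bool, y c' * (D c' : ℝ)
        = ∑ r ∈ S, (if c' r = false then y c' else 0) := by
      intro c'
      rw [← Finset.sum_filter, Finset.sum_const, nsmul_eq_mul, mul_comm]
    rw [Finset.sum_congr rfl (fun c' _ => this c'), Finset.sum_comm]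
    apply Finset.sum_congr rfl
    intro r hr
    have hcr : c r = true := by
      simp only [hS, mem_filter, mem_univ, true_and] at hr
      exact hr
    rw [← Finset.sum_filter]
    apply Finset.sum_congr _ (fun _ _ => rfl)
    apply Finset.filter_congr
    intro c' _
    simp [hcr]
  have step3 : ∑ r ∈ S, ∑ c' ∈ univ.filter (fun c' : R → Bool => c' r ≠ c r), y c'
      ≤ ∑ r ∈ S, α := Finset.sum_le_sum (fun r _ => hnoisy r)
  have step4 : (∑ r ∈ S, α) = α * (votesFor c : ℝ) := by
    rw [Finset.sum_const, nsmul_eq_mul, hscard, mul_comm]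
  calc (∑ c' ∈ B, y c') * δ * (votesFor c : ℝ)
      ≤ ∑ c' ∈ B, y c' * (D c' : ℝ) := step1
    _ ≤ ∑ c' ∈ univ, y c' * (D c' : ℝ) := step2
    _ = ∑ r ∈ S, ∑ c' ∈ univ.filter (fun c' : R → Bool => c' r ≠ c r), y c' := swap
    _ ≤ ∑ r ∈ S, α := step3
    _ = α * (votesFor c : ℝ) := step4
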